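/- For every matrix X in the group G generated by M₁ = (1/2)·[[1,−1,1,1],[−1,−1,−1,1],[1,1,−1,1],[1,−1,−1,−1]] and M₂ = (1/2)·[[−1,1,−1,−1],[1,−1,−1,−1],[−1,−1,1,−1],[1,1,1,−1]], the inequality Tr(XA) ≤ 1 holds for A = (1/4)·[[1,0,1,0],[0,1,0,−1],[0,1,0,1],[1,0,1,−2]]. -/

import Mathlib

set_option maxHeartbeats 1000000 in
/-- one-hot structure of a {0,±1} unit row -/
lemma onehot4 (a b c d : ℚ)
    (ha : a = 0 ∨ a = 1 ∨ a = -1) (hb : b = 0 ∨ b = 1 ∨ b = -1)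
    (hc : c = 0 ∨ c = 1 ∨ c = -1) (hd : d = 0 ∨ d = 1 ∨ d = -1)
    (h : a * a + b * b + c * c + d * d = 1) :
    ((a = 1 ∨ a = -1) ∧ b = 0 ∧ c = 0 ∧ d = 0) ∨
    (a = 0 ∧ (b = 1 ∨ b = -1) ∧ c = 0 ∧ d = 0) ∨
    (a = 0 ∧ b = 0 ∧ (c = 1 ∨ c = -1) ∧ d = 0) ∨
    (a = 0 ∧ b = 0 ∧ c = 0 ∧ (d = 1 ∨ d = -1)) := by
  rcases ha with rfl | rfl | rfl <;> rcases hb with rfl | rfl | rfl <;>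
    rcases hc with rfl | rfl | rfl <;> rcases hd with rfl | rfl | rfl <;>
    norm_num at h <;> norm_num

/-- dot of a {0,±1} unit row with a {0,±1} column -/
lemma dotPP (a b c d x y z w : ℚ)
    (ha : a = 0 ∨ a = 1 ∨ a = -1) (hb : b = 0 ∨ b = 1 ∨ b = -1)
    (hc : c = 0 ∨ c = 1 ∨ c = -1) (hd : d = 0 ∨ d = 1 ∨ d = -1)
    (h : a * a + b * b + c * c + d * d = 1)
    (hx : x = 0 ∨ x = 1 ∨ x = -1) (hy : y = 0 ∨ y = 1 ∨ y = -1)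
    (hz : z = 0 ∨ z = 1 ∨ z = -1) (hw : w = 0 ∨ w = 1 ∨ w = -1) :
    a * x + b * y + c * z + d * w = 0 ∨ a * x + b * y + c * z + d * w = 1 ∨
      a * x + b * y + c * z + d * w = -1 := by
  rcases onehot4 a b c d ha hb hc hd h with
      ⟨(rfl | rfl), rfl, rfl, rfl⟩ | ⟨rfl, (rfl | rfl), rfl, rfl⟩ |
      ⟨rfl, rfl, (rfl | rfl), rfl⟩ | ⟨rfl, rfl, rfl, (rfl | rfl)⟩
  · rcases hx with rfl | rfl | rfl <;> norm_num
  · rcases hx with rfl | rfl | rfl <;> norm_num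
  · rcases hy with rfl | rfl | rfl <;> norm_num
  · rcases hy with rfl | rfl | rfl <;> norm_num
  · rcases hz with rfl | rfl | rfl <;> norm_num
  · rcases hz with rfl | rfl | rfl <;> norm_num
  · rcases hw with rfl | rfl | rfl <;> norm_num
  · rcases hw with rfl | rfl | rfl <;> norm_num

/-- dot of a {0,±1} unit row with a ±1/2 column -/
lemma dotPH (a b c d x y z w : ℚ)
    (ha : a = 0 ∨ a = 1 ∨ a = -1) (hb : b = 0 ∨ b = 1 ∨ b = -1)
    (hc : c = 0 ∨ c = 1 ∨ c = -1) (hd : d = 0 ∨ d = 1 ∨ d = -1)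
    (h : a * a + b * b + c * c + d * d = 1)
    (hx : x = 1/2 ∨ x = -(1/2)) (hy : y = 1/2 ∨ y = -(1/2))
    (hz : z = 1/2 ∨ z = -(1/2)) (hw : w = 1/2 ∨ w = -(1/2)) :
    a * x + b * y + c * z + d * w = 1/2 ∨ a * x + b * y + c * z + d * w = -(1/2) := by
  rcases onehot4 a b c d ha hb hc hd h with
      ⟨(rfl | rfl), rfl, rfl, rfl⟩ | ⟨rfl, (rfl | rfl), rfl, rfl⟩ |
      ⟨rfl, rfl, (rfl | rfl), rfl⟩ | ⟨rfl, rfl, rfl, (rfl | rfl)⟩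
  · rcases hx with rfl | rfl <;> norm_num
  · rcases hx with rfl | rfl <;> norm_num
  · rcases hy with rfl | rfl <;> norm_num
  · rcases hy with rfl | rfl <;> norm_num
  · rcases hz with rfl | rfl <;> norm_num
  · rcases hz with rfl | rfl <;> norm_num
  · rcases hw with rfl | rfl <;> norm_num
  · rcases hw with rfl | rfl <;> norm_num

/-- dot of a ±1/2 row with a {0,±1} unit column -/
lemma dotHP (a b c d x y z w : ℚ)
    (ha : a = 1/2 ∨ a = -(1/2)) (hb : b = 1/2 ∨ b = -(1/2))
    (hc : c = 1/2 ∨ c = -(1/2)) (hd : d = 1/2 ∨ d = -(1/2))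
    (hx : x = 0 ∨ x = 1 ∨ x = -1) (hy : y = 0 ∨ y = 1 ∨ y = -1)
    (hz : z = 0 ∨ z = 1 ∨ z = -1) (hw : w = 0 ∨ w = 1 ∨ w = -1)
    (h : x * x + y * y + z * z + w * w = 1) :
    a * x + b * y + c * z + d * w = 1/2 ∨ a * x + b * y + c * z + d * w = -(1/2) := by
  rcases onehot4 x y z w hx hy hz hw h with
      ⟨(rfl | rfl), rfl, rfl, rfl⟩ | ⟨rfl, (rfl | rfl), rfl, rfl⟩ |
      ⟨rfl, rfl, (rfl | rfl), rfl⟩ | ⟨rfl, rfl, rfl, (rfl | rfl)⟩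
  · rcases ha with rfl | rfl <;> norm_num
  · rcases ha with rfl | rfl <;> norm_num
  · rcases hb with rfl | rfl <;> norm_num
  · rcases hb with rfl | rfl <;> norm_num
  · rcases hc with rfl | rfl <;> norm_num
  · rcases hc with rfl | rfl <;> norm_num
  · rcases hd with rfl | rfl <;> norm_num
  · rcases hd with rfl | rfl <;> norm_num

set_option maxHeartbeats 2000000 in
/-- dot of two ±1/2 rows lies in {0,±1/2,±1} -/
lemma dotHH (a b c d x y z w : ℚ)
    (ha : a = 1/2 ∨ a = -(1/2)) (hb : b = 1/2 ∨ b = -(1/2))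
    (hc : c = 1/2 ∨ c = -(1/2)) (hd : d = 1/2 ∨ d = -(1/2))
    (hx : x = 1/2 ∨ x = -(1/2)) (hy : y = 1/2 ∨ y = -(1/2))
    (hz : z = 1/2 ∨ z = -(1/2)) (hw : w = 1/2 ∨ w = -(1/2)) :
    a * x + b * y + c * z + d * w = 0 ∨ a * x + b * y + c * z + d * w = 1 ∨
    a * x + b * y + c * z + d * w = -1 ∨ a * x + b * y + c * z + d * w = 1/2 ∨
    a * x + b * y + c * z + d * w = -(1/2) := by
  rcases ha with rfl | rfl <;> rcases hb with rfl | rfl <;> rcases hc with rfl | rfl <;>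
    rcases hd with rfl | rfl <;> rcases hx with rfl | rfl <;> rcases hy with rfl | rfl <;>
    rcases hz with rfl | rfl <;> rcases hw with rfl | rfl <;> norm_num

set_option maxHeartbeats 8000000 in
/-- a unit row with entries in {0,±1/2,±1} is all-half or all-integer -/
lemma rowDichotomy (a b c d : ℚ)
    (ha : a = 0 ∨ a = 1 ∨ a = -1 ∨ a = 1/2 ∨ a = -(1/2))
    (hb : b = 0 ∨ b = 1 ∨ b = -1 ∨ b = 1/2 ∨ b = -(1/2))
    (hc : c = 0 ∨ c = 1 ∨ c = -1 ∨ c = 1/2 ∨ c = -(1/2))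
    (hd : d = 0 ∨ d = 1 ∨ d = -1 ∨ d = 1/2 ∨ d = -(1/2))
    (h : a * a + b * b + c * c + d * d = 1) :
    ((a = 1/2 ∨ a = -(1/2)) ∧ (b = 1/2 ∨ b = -(1/2)) ∧ (c = 1/2 ∨ c = -(1/2)) ∧
      (d = 1/2 ∨ d = -(1/2))) ∨
    ((a = 0 ∨ a = 1 ∨ a = -1) ∧ (b = 0 ∨ b = 1 ∨ b = -1) ∧ (c = 0 ∨ c = 1 ∨ c = -1) ∧
      (d = 0 ∨ d = 1 ∨ d = -1)) := by
  rcases ha with rfl | rfl | rfl | rfl | rfl <;> rcases hb with rfl | rfl | rfl | rfl | rfl <;>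
    rcases hc with rfl | rfl | rfl | rfl | rfl <;> rcases hd with rfl | rfl | rfl | rfl | rfl <;>
    norm_num at h <;> norm_num

/-- a ±1/2 row cannot be orthogonal to a {0,±1} unit row -/
lemma mixOrtho (a b c d x y z w : ℚ)
    (ha : a = 1/2 ∨ a = -(1/2)) (hb : b = 1/2 ∨ b = -(1/2))
    (hc : c = 1/2 ∨ c = -(1/2)) (hd : d = 1/2 ∨ d = -(1/2))
    (hx : x = 0 ∨ x = 1 ∨ x = -1) (hy : y = 0 ∨ y = 1 ∨ y = -1)
    (hz : z = 0 ∨ z = 1 ∨ z = -1) (hw : w = 0 ∨ w = 1 ∨ w = -1)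
    (h : x * x + y * y + z * z + w * w = 1)
    (hdot : a * x + b * y + c * z + d * w = 0) : False := by
  rcases dotHP a b c d x y z w ha hb hc hd hx hy hz hw h with h' | h' <;>
    rw [hdot] at h' <;> norm_num at h'

lemma sqB (x : ℚ) (h : x = 0 ∨ x = 1 ∨ x = -1) : x ≤ x * x ∧ -x ≤ x * x := by
  rcases h with rfl | rfl | rfl <;> norm_num

/-- P-case bound -/
lemma Pcase (a00 a01 a02 a03 a10 a11 a12 a13 a20 a21 a22 a23 a30 a31 a32 a33 : ℚ)
    (h00 : a00 = 0 ∨ a00 = 1 ∨ a00 = -1) (h03 : a03 = 0 ∨ a03 = 1 ∨ a03 = -1)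
    (h11 : a11 = 0 ∨ a11 = 1 ∨ a11 = -1) (h12 : a12 = 0 ∨ a12 = 1 ∨ a12 = -1)
    (h20 : a20 = 0 ∨ a20 = 1 ∨ a20 = -1) (h23 : a23 = 0 ∨ a23 = 1 ∨ a23 = -1)
    (h31 : a31 = 0 ∨ a31 = 1 ∨ a31 = -1) (h32 : a32 = 0 ∨ a32 = 1 ∨ a32 = -1)
    (h33 : a33 = 0 ∨ a33 = 1 ∨ a33 = -1)
    (row1 : a10 * a10 + a11 * a11 + a12 * a12 + a13 * a13 = 1)
    (row3 : a30 * a30 + a31 * a31 + a32 * a32 + a33 * a33 = 1)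
    (col0 : a00 * a00 + a10 * a10 + a20 * a20 + a30 * a30 = 1)
    (col3 : a03 * a03 + a13 * a13 + a23 * a23 + a33 * a33 = 1) :
    a00 + a03 + a11 + a12 + a20 + a23 + (-a31 + a32 - 2 * a33) ≤ 4 := by
  obtain ⟨b1, b2⟩ := sqB a00 h00
  obtain ⟨c1, c2⟩ := sqB a03 h03
  obtain ⟨d1, d2⟩ := sqB a11 h11
  obtain ⟨e1, e2⟩ := sqB a12 h12
  obtain ⟨f1, f2⟩ := sqB a20 h20
  obtain ⟨g1, g2⟩ := sqB a23 h23
  obtain ⟨i1, i2⟩ := sqB a31 h31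
  obtain ⟨j1, j2⟩ := sqB a32 h32
  obtain ⟨k1, k2⟩ := sqB a33 h33
  nlinarith [mul_self_nonneg a10, mul_self_nonneg a13, mul_self_nonneg a30]

set_option maxHeartbeats 8000000 in
/-- H-case bound -/
lemma Hcase (a00 a01 a02 a03 a10 a11 a12 a13 a20 a21 a22 a23 a30 a31 a32 a33 : ℚ)
    (h00 : a00 = 1/2 ∨ a00 = -(1/2)) (h01 : a01 = 1/2 ∨ a01 = -(1/2))
    (h02 : a02 = 1/2 ∨ a02 = -(1/2)) (h03 : a03 = 1/2 ∨ a03 = -(1/2))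
    (h10 : a10 = 1/2 ∨ a10 = -(1/2)) (h11 : a11 = 1/2 ∨ a11 = -(1/2))
    (h12 : a12 = 1/2 ∨ a12 = -(1/2)) (h13 : a13 = 1/2 ∨ a13 = -(1/2))
    (h20 : a20 = 1/2 ∨ a20 = -(1/2)) (h21 : a21 = 1/2 ∨ a21 = -(1/2))
    (h22 : a22 = 1/2 ∨ a22 = -(1/2)) (h23 : a23 = 1/2 ∨ a23 = -(1/2))
    (h30 : a30 = 1/2 ∨ a30 = -(1/2)) (h31 : a31 = 1/2 ∨ a31 = -(1/2))
    (h32 : a32 = 1/2 ∨ a32 = -(1/2)) (h33 : a33 = 1/2 ∨ a33 = -(1/2))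
    (e01 : a00 * a01 + a10 * a11 + a20 * a21 + a30 * a31 = 0)
    (e02 : a00 * a02 + a10 * a12 + a20 * a22 + a30 * a32 = 0)
    (e03 : a00 * a03 + a10 * a13 + a20 * a23 + a30 * a33 = 0)
    (e12 : a01 * a02 + a11 * a12 + a21 * a22 + a31 * a32 = 0)
    (e13 : a01 * a03 + a11 * a13 + a21 * a23 + a31 * a33 = 0)
    (e23 : a02 * a03 + a12 * a13 + a22 * a23 + a32 * a33 = 0) :
    a00 + a03 + a11 + a12 + a20 + a23 + (-a31 + a32 - 2 * a33) ≤ 4 := by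
  rcases h00 with rfl | rfl <;> rcases h03 with rfl | rfl <;> rcases h11 with rfl | rfl <;>
    rcases h12 with rfl | rfl <;> rcases h20 with rfl | rfl <;> rcases h23 with rfl | rfl <;>
    rcases h31 with rfl | rfl <;> rcases h32 with rfl | rfl <;> rcases h33 with rfl | rfl <;>
    first
      | (norm_num; done)
      | (rcases h01 with rfl | rfl <;> rcases h02 with rfl | rfl <;>
          rcases h10 with rfl | rfl <;> rcases h13 with rfl | rfl <;>
          rcases h21 with rfl | rfl <;> rcases h22 with rfl | rfl <;>
          rcases h30 with rfl | rfl <;> norm_num at e01 <;> norm_num at e02 <;> norm_num at e03 <;>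
            norm_num at e12 <;> norm_num at e13 <;> norm_num at e23)


open Matrix

section Glue


lemma one_fin_four' : (1 : Matrix (Fin 4) (Fin 4) ℚ) =
    !![1, 0, 0, 0; 0, 1, 0, 0; 0, 0, 1, 0; 0, 0, 0, 1] := by
  ext i j
  fin_cases i <;> fin_cases j <;> rfl

lemma eta_fin_four' (A : Matrix (Fin 4) (Fin 4) ℚ) :
    A = !![A 0 0, A 0 1, A 0 2, A 0 3;
           A 1 0, A 1 1, A 1 2, A 1 3;
           A 2 0, A 2 1, A 2 2, A 2 3;
           A 3 0, A 3 1, A 3 2, A 3 3] := by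
  ext i j
  fin_cases i <;> fin_cases j <;> rfl

set_option maxHeartbeats 1000000 in
lemma mul_fin_four'
    (a₁₁ a₁₂ a₁₃ a₁₄ a₂₁ a₂₂ a₂₃ a₂₄ a₃₁ a₃₂ a₃₃ a₃₄ a₄₁ a₄₂ a₄₃ a₄₄
     b₁₁ b₁₂ b₁₃ b₁₄ b₂₁ b₂₂ b₂₃ b₂₄ b₃₁ b₃₂ b₃₃ b₃₄ b₄₁ b₄₂ b₄₃ b₄₄ : ℚ) :
    !![a₁₁, a₁₂, a₁₃, a₁₄;
       a₂₁, a₂₂, a₂₃, a₂₄;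
       a₃₁, a₃₂, a₃₃, a₃₄;
       a₄₁, a₄₂, a₄₃, a₄₄] * !![b₁₁, b₁₂, b₁₃, b₁₄;
                                b₂₁, b₂₂, b₂₃, b₂₄;
                                b₃₁, b₃₂, b₃₃, b₃₄;
                                b₄₁, b₄₂, b₄₃, b₄₄] =
    !![a₁₁*b₁₁ + a₁₂*b₂₁ + a₁₃*b₃₁ + a₁₄*b₄₁, a₁₁*b₁₂ + a₁₂*b₂₂ + a₁₃*b₃₂ + a₁₄*b₄₂,
         a₁₁*b₁₃ + a₁₂*b₂₃ + a₁₃*b₃₃ + a₁₄*b₄₃, a₁₁*b₁₄ + a₁₂*b₂₄ + a₁₃*b₃₄ + a₁₄*b₄₄;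
       a₂₁*b₁₁ + a₂₂*b₂₁ + a₂₃*b₃₁ + a₂₄*b₄₁, a₂₁*b₁₂ + a₂₂*b₂₂ + a₂₃*b₃₂ + a₂₄*b₄₂,
         a₂₁*b₁₃ + a₂₂*b₂₃ + a₂₃*b₃₃ + a₂₄*b₄₃, a₂₁*b₁₄ + a₂₂*b₂₄ + a₂₃*b₃₄ + a₂₄*b₄₄;
       a₃₁*b₁₁ + a₃₂*b₂₁ + a₃₃*b₃₁ + a₃₄*b₄₁, a₃₁*b₁₂ + a₃₂*b₂₂ + a₃₃*b₃₂ + a₃₄*b₄₂,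
         a₃₁*b₁₃ + a₃₂*b₂₃ + a₃₃*b₃₃ + a₃₄*b₄₃, a₃₁*b₁₄ + a₃₂*b₂₄ + a₃₃*b₃₄ + a₃₄*b₄₄;
       a₄₁*b₁₁ + a₄₂*b₂₁ + a₄₃*b₃₁ + a₄₄*b₄₁, a₄₁*b₁₂ + a₄₂*b₂₂ + a₄₃*b₃₂ + a₄₄*b₄₂,
         a₄₁*b₁₃ + a₄₂*b₂₃ + a₄₃*b₃₃ + a₄₄*b₄₃, a₄₁*b₁₄ + a₄₂*b₂₄ + a₄₃*b₃₄ + a₄₄*b₄₄] := by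
  ext i j
  fin_cases i <;> fin_cases j <;>
    simp [Matrix.mul_apply, Fin.sum_univ_succ, ← add_assoc]

lemma trace_fin_four' (A : Matrix (Fin 4) (Fin 4) ℚ) :
    Matrix.trace A = A 0 0 + A 1 1 + A 2 2 + A 3 3 := by
  simp [Matrix.trace, Fin.sum_univ_four]

abbrev isH (M : Matrix (Fin 4) (Fin 4) ℚ) : Prop := ∀ i j, M i j = 1/2 ∨ M i j = -(1/2)
abbrev isP (M : Matrix (Fin 4) (Fin 4) ℚ) : Prop := ∀ i j, M i j = 0 ∨ M i j = 1 ∨ M i j = -1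
abbrev good (M : Matrix (Fin 4) (Fin 4) ℚ) : Prop := Mᵀ * M = 1 ∧ (isH M ∨ isP M)

lemma colNorm {M : Matrix (Fin 4) (Fin 4) ℚ} (h : Mᵀ * M = 1) (j : Fin 4) :
    M 0 j * M 0 j + M 1 j * M 1 j + M 2 j * M 2 j + M 3 j * M 3 j = 1 := by
  have := congrFun (congrFun h j) j
  simpa [Matrix.mul_apply, Fin.sum_univ_four, Matrix.one_apply] using this

lemma colOrtho {M : Matrix (Fin 4) (Fin 4) ℚ} (h : Mᵀ * M = 1) (j k : Fin 4) (hjk : j ≠ k) :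
    M 0 j * M 0 k + M 1 j * M 1 k + M 2 j * M 2 k + M 3 j * M 3 k = 0 := by
  have := congrFun (congrFun h j) k
  simpa [Matrix.mul_apply, Fin.sum_univ_four, Matrix.one_apply, hjk] using this

lemma rowNorm {M : Matrix (Fin 4) (Fin 4) ℚ} (h : Mᵀ * M = 1) (i : Fin 4) :
    M i 0 * M i 0 + M i 1 * M i 1 + M i 2 * M i 2 + M i 3 * M i 3 = 1 := by
  have h' : M * Mᵀ = 1 := mul_eq_one_comm.mp h
  have := congrFun (congrFun h' i) i
  simpa [Matrix.mul_apply, Fin.sum_univ_four, Matrix.one_apply] using this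

lemma rowOrtho {M : Matrix (Fin 4) (Fin 4) ℚ} (h : Mᵀ * M = 1) (i k : Fin 4) (hik : i ≠ k) :
    M i 0 * M k 0 + M i 1 * M k 1 + M i 2 * M k 2 + M i 3 * M k 3 = 0 := by
  have h' : M * Mᵀ = 1 := mul_eq_one_comm.mp h
  have := congrFun (congrFun h' i) k
  simpa [Matrix.mul_apply, Fin.sum_univ_four, Matrix.one_apply, hik] using this

lemma dichotomy {M : Matrix (Fin 4) (Fin 4) ℚ} (horth : Mᵀ * M = 1)
    (h5 : ∀ i j, M i j = 0 ∨ M i j = 1 ∨ M i j = -1 ∨ M i j = 1/2 ∨ M i j = -(1/2)) :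
    isH M ∨ isP M := by
  have rows : ∀ i,
      ((M i 0 = 1/2 ∨ M i 0 = -(1/2)) ∧ (M i 1 = 1/2 ∨ M i 1 = -(1/2)) ∧
       (M i 2 = 1/2 ∨ M i 2 = -(1/2)) ∧ (M i 3 = 1/2 ∨ M i 3 = -(1/2))) ∨
      ((M i 0 = 0 ∨ M i 0 = 1 ∨ M i 0 = -1) ∧ (M i 1 = 0 ∨ M i 1 = 1 ∨ M i 1 = -1) ∧
       (M i 2 = 0 ∨ M i 2 = 1 ∨ M i 2 = -1) ∧ (M i 3 = 0 ∨ M i 3 = 1 ∨ M i 3 = -1)) :=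
    fun i => rowDichotomy _ _ _ _ (h5 i 0) (h5 i 1) (h5 i 2) (h5 i 3) (rowNorm horth i)
  by_cases hA : ∀ i j, M i j = 1/2 ∨ M i j = -(1/2)
  · exact Or.inl hA
  · right
    push_neg at hA
    obtain ⟨i0, j0, hne1, hne2⟩ := hA
    have hH0 : ¬((M i0 0 = 1/2 ∨ M i0 0 = -(1/2)) ∧ (M i0 1 = 1/2 ∨ M i0 1 = -(1/2)) ∧
        (M i0 2 = 1/2 ∨ M i0 2 = -(1/2)) ∧ (M i0 3 = 1/2 ∨ M i0 3 = -(1/2))) := by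
      intro h
      obtain ⟨k0, k1, k2, k3⟩ := h
      fin_cases j0
      · rcases k0 with h' | h'
        exacts [hne1 h', hne2 h']
      · rcases k1 with h' | h'
        exacts [hne1 h', hne2 h']
      · rcases k2 with h' | h'
        exacts [hne1 h', hne2 h']
      · rcases k3 with h' | h'
        exacts [hne1 h', hne2 h']
    have hP0 := (rows i0).resolve_left hH0
    intro i j
    rcases rows i with hrow | hrow
    · exfalso
      rcases eq_or_ne i i0 with rfl | hne
      · exact hH0 hrow
      · exact mixOrtho _ _ _ _ _ _ _ _ hrow.1 hrow.2.1 hrow.2.2.1 hrow.2.2.2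
          hP0.1 hP0.2.1 hP0.2.2.1 hP0.2.2.2 (rowNorm horth i0) (rowOrtho horth i i0 hne)
    · fin_cases j
      exacts [hrow.1, hrow.2.1, hrow.2.2.1, hrow.2.2.2]

lemma good_mul {M N : Matrix (Fin 4) (Fin 4) ℚ} (hM : good M) (hN : good N) :
    good (M * N) := by
  obtain ⟨hM1, hMt⟩ := hM
  obtain ⟨hN1, hNt⟩ := hN
  have horth : (M * N)ᵀ * (M * N) = 1 := by
    rw [Matrix.transpose_mul, Matrix.mul_assoc, ← Matrix.mul_assoc Mᵀ, hM1, Matrix.one_mul, hN1]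
  refine ⟨horth, ?_⟩
  have hent : ∀ i j, (M * N) i j =
      M i 0 * N 0 j + M i 1 * N 1 j + M i 2 * N 2 j + M i 3 * N 3 j := fun i j => by
    simp [Matrix.mul_apply, Fin.sum_univ_four]
  rcases hMt with hH | hP <;> rcases hNt with hH' | hP'
  · -- H * H : entries in the 5-element set, then dichotomy
    refine dichotomy horth fun i j => ?_
    rw [hent]
    exact dotHH _ _ _ _ _ _ _ _ (hH i 0) (hH i 1) (hH i 2) (hH i 3)
      (hH' 0 j) (hH' 1 j) (hH' 2 j) (hH' 3 j)
  · left; intro i j; rw [hent]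
    exact dotHP _ _ _ _ _ _ _ _ (hH i 0) (hH i 1) (hH i 2) (hH i 3)
      (hP' 0 j) (hP' 1 j) (hP' 2 j) (hP' 3 j) (colNorm hN1 j)
  · left; intro i j; rw [hent]
    exact dotPH _ _ _ _ _ _ _ _ (hP i 0) (hP i 1) (hP i 2) (hP i 3) (rowNorm hM1 i)
      (hH' 0 j) (hH' 1 j) (hH' 2 j) (hH' 3 j)
  · right; intro i j; rw [hent]
    exact dotPP _ _ _ _ _ _ _ _ (hP i 0) (hP i 1) (hP i 2) (hP i 3) (rowNorm hM1 i)
      (hP' 0 j) (hP' 1 j) (hP' 2 j) (hP' 3 j)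

lemma good_one : good (1 : Matrix (Fin 4) (Fin 4) ℚ) := by
  refine ⟨by simp, Or.inr fun i j => ?_⟩
  rcases eq_or_ne i j with rfl | h
  · simp
  · simp [Matrix.one_apply_ne h]

lemma good_transpose {M : Matrix (Fin 4) (Fin 4) ℚ} (hM : good M) : good Mᵀ := by
  obtain ⟨hM1, hMt⟩ := hM
  refine ⟨by rw [Matrix.transpose_transpose]; exact mul_eq_one_comm.mp hM1, ?_⟩
  rcases hMt with hH | hP
  · exact Or.inl fun i j => hH j i
  · exact Or.inr fun i j => hP j i

end Glue

theorem stmt_7 (u₁ u₂ : GL (Fin 4) ℚ)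
    (h₁ : (u₁ : Matrix (Fin 4) (Fin 4) ℚ) =
      (1 / 2 : ℚ) • !![1, -1, 1, 1; -1, -1, -1, 1; 1, 1, -1, 1; 1, -1, -1, -1])
    (h₂ : (u₂ : Matrix (Fin 4) (Fin 4) ℚ) =
      (1 / 2 : ℚ) • !![-1, 1, -1, -1; 1, -1, -1, -1; -1, -1, 1, -1; 1, 1, 1, -1])
    (X : GL (Fin 4) ℚ) (hX : X ∈ Subgroup.closure {u₁, u₂}) :
    Matrix.trace ((X : Matrix (Fin 4) (Fin 4) ℚ) *
      ((1 / 4 : ℚ) • !![1, 0, 1, 0; 0, 1, 0, -1; 0, 1, 0, 1; 1, 0, 1, -2])) ≤ 1 := by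
  have h₁' : (u₁ : Matrix (Fin 4) (Fin 4) ℚ) =
      !![1/2, -(1/2), 1/2, 1/2; -(1/2), -(1/2), -(1/2), 1/2;
         1/2, 1/2, -(1/2), 1/2; 1/2, -(1/2), -(1/2), -(1/2)] := by
    rw [h₁]; ext i j; fin_cases i <;> fin_cases j <;> norm_num
  have h₂' : (u₂ : Matrix (Fin 4) (Fin 4) ℚ) =
      !![-(1/2), 1/2, -(1/2), -(1/2); 1/2, -(1/2), -(1/2), -(1/2);
         -(1/2), -(1/2), 1/2, -(1/2); 1/2, 1/2, 1/2, -(1/2)] := by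
    rw [h₂]; ext i j; fin_cases i <;> fin_cases j <;> norm_num
  have ht₁ : (!![1/2, -(1/2), 1/2, 1/2; -(1/2), -(1/2), -(1/2), 1/2;
         1/2, 1/2, -(1/2), 1/2; 1/2, -(1/2), -(1/2), -(1/2)] : Matrix (Fin 4) (Fin 4) ℚ)ᵀ =
      !![1/2, -(1/2), 1/2, 1/2; -(1/2), -(1/2), 1/2, -(1/2);
         1/2, -(1/2), -(1/2), -(1/2); 1/2, 1/2, 1/2, -(1/2)] := by
    ext i j
    simp only [Matrix.transpose_apply]
    fin_cases i <;> fin_cases j <;> norm_num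
  have ht₂ : (!![-(1/2), 1/2, -(1/2), -(1/2); 1/2, -(1/2), -(1/2), -(1/2);
         -(1/2), -(1/2), 1/2, -(1/2); 1/2, 1/2, 1/2, -(1/2)] : Matrix (Fin 4) (Fin 4) ℚ)ᵀ =
      !![-(1/2), 1/2, -(1/2), 1/2; 1/2, -(1/2), -(1/2), 1/2;
         -(1/2), -(1/2), 1/2, 1/2; -(1/2), -(1/2), -(1/2), -(1/2)] := by
    ext i j
    simp only [Matrix.transpose_apply]
    fin_cases i <;> fin_cases j <;> norm_num
  have hu₁ : good (u₁ : Matrix (Fin 4) (Fin 4) ℚ) := by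
    refine ⟨?_, Or.inl fun i j => ?_⟩
    · rw [h₁', ht₁, mul_fin_four', one_fin_four']
      norm_num
    · rw [h₁']; fin_cases i <;> fin_cases j <;> norm_num
  have hu₂ : good (u₂ : Matrix (Fin 4) (Fin 4) ℚ) := by
    refine ⟨?_, Or.inl fun i j => ?_⟩
    · rw [h₂', ht₂, mul_fin_four', one_fin_four']
      norm_num
    · rw [h₂']; fin_cases i <;> fin_cases j <;> norm_num
  have hgood : good (X : Matrix (Fin 4) (Fin 4) ℚ) := by
    induction hX using Subgroup.closure_induction with
    | mem x hx =>
      simp only [Set.mem_insert_iff, Set.mem_singleton_iff] at hx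
      rcases hx with rfl | rfl
      · exact hu₁
      · exact hu₂
    | one => simpa using good_one
    | mul x y hx hy hgx hgy => simpa using good_mul hgx hgy
    | inv x hx hgx =>
      have hxinv : ((x⁻¹ : GL (Fin 4) ℚ) : Matrix (Fin 4) (Fin 4) ℚ) =
          ((x : Matrix (Fin 4) (Fin 4) ℚ))ᵀ := by
        have h1 := hgx.1
        have : ((x : Matrix (Fin 4) (Fin 4) ℚ))⁻¹ = ((x : Matrix (Fin 4) (Fin 4) ℚ))ᵀ :=
          Matrix.inv_eq_left_inv h1
        rw [← this, Matrix.coe_units_inv]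
      rw [hxinv]
      exact good_transpose hgx
  obtain ⟨horth, htype⟩ := hgood
  set M := (X : Matrix (Fin 4) (Fin 4) ℚ) with hMdef
  have hA4 : ((1 / 4 : ℚ) • !![1, 0, 1, 0; 0, 1, 0, -1; 0, 1, 0, 1; 1, 0, 1, -2] :
      Matrix (Fin 4) (Fin 4) ℚ) =
      !![1/4, 0, 1/4, 0; 0, 1/4, 0, -(1/4); 0, 1/4, 0, 1/4; 1/4, 0, 1/4, -(1/2)] := by
    ext i j; fin_cases i <;> fin_cases j <;> norm_num
  have expand : Matrix.trace (M *
      ((1 / 4 : ℚ) • !![1, 0, 1, 0; 0, 1, 0, -1; 0, 1, 0, 1; 1, 0, 1, -2])) =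
      (M 0 0 + M 0 3 + M 1 1 + M 1 2 + M 2 0 + M 2 3 +
        (-(M 3 1) + M 3 2 - 2 * M 3 3)) / 4 := by
    rw [hA4]
    nth_rewrite 1 [eta_fin_four' M]
    rw [mul_fin_four', trace_fin_four']
    norm_num [Matrix.cons_val_two, Matrix.cons_val_three, Matrix.vecHead, Matrix.vecTail]
    ring
  rw [expand]
  have hbound : M 0 0 + M 0 3 + M 1 1 + M 1 2 + M 2 0 + M 2 3 +
      (-(M 3 1) + M 3 2 - 2 * M 3 3) ≤ 4 := by
    rcases htype with hH | hP
    · exact Hcase (M 0 0) (M 0 1) (M 0 2) (M 0 3) (M 1 0) (M 1 1) (M 1 2) (M 1 3)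
        (M 2 0) (M 2 1) (M 2 2) (M 2 3) (M 3 0) (M 3 1) (M 3 2) (M 3 3)
        (hH 0 0) (hH 0 1) (hH 0 2) (hH 0 3) (hH 1 0) (hH 1 1) (hH 1 2) (hH 1 3)
        (hH 2 0) (hH 2 1) (hH 2 2) (hH 2 3) (hH 3 0) (hH 3 1) (hH 3 2) (hH 3 3)
        (colOrtho horth 0 1 (by decide)) (colOrtho horth 0 2 (by decide))
        (colOrtho horth 0 3 (by decide)) (colOrtho horth 1 2 (by decide))
        (colOrtho horth 1 3 (by decide)) (colOrtho horth 2 3 (by decide))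
    · exact Pcase (M 0 0) (M 0 1) (M 0 2) (M 0 3) (M 1 0) (M 1 1) (M 1 2) (M 1 3)
        (M 2 0) (M 2 1) (M 2 2) (M 2 3) (M 3 0) (M 3 1) (M 3 2) (M 3 3)
        (hP 0 0) (hP 0 3) (hP 1 1) (hP 1 2) (hP 2 0) (hP 2 3) (hP 3 1) (hP 3 2) (hP 3 3)
        (rowNorm horth 1) (rowNorm horth 3) (colNorm horth 0) (colNorm horth 3)
  linarith
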